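/- In a singly linked list component that is a simple path n0 → n1 → … → n_{k−1} where the only special nodes are those pointed to by variables plus endpoints of back edges, Abstract-SLL applied to a pure path whose ordinary nodes form contiguous segments yields a component whose node count equals the number of special nodes plus the number of maximal nonempty contiguous segments of ordinary nodes (each segment collapsing to one node with a self-edge). -/

import Mathlib

/-- Layout attribute of a heap component. -/
inductive Layout where
  | SLL | T | C | DAG
deriving DecidableEq

/-- An edge is either a variable edge `(v, n)` or a node edge `(n, n')`. -/
abbrev Edge (Var Node : Type) := (Var × Node) ⊕ (Node × Node)

/-- An abstract component `(V, N, P)` with a layout attribute. -/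
structure AComp (Var Node : Type) where
  layout : Layout
  V : Set Var
  N : Set Node
  P : Set (Edge Var Node)

variable {Var Node : Type}

/-- `(fN, fP)` witnesses that `C'` is a valid abstraction of `C`:
both maps are onto, and the `fP`-preimage of every edge of `C'` consists only of
edges of `C` whose endpoints are mapped by `fN` to the corresponding endpoints. -/
def IsWitness (C' C : AComp Var Node) (fN : Node → Node)
    (fP : Edge Var Node → Edge Var Node) : Prop :=
  (∀ n ∈ C.N, fN n ∈ C'.N) ∧
  (∀ n' ∈ C'.N, ∃ n ∈ C.N, fN n = n') ∧
  (∀ e ∈ C.P, fP e ∈ C'.P) ∧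
  (∀ e' ∈ C'.P, ∃ e ∈ C.P, fP e = e') ∧
  (∀ v n', Sum.inl (v, n') ∈ C'.P →
    ∀ e ∈ C.P, fP e = Sum.inl (v, n') → ∃ n, e = Sum.inl (v, n) ∧ fN n = n') ∧
  (∀ a' b', Sum.inr (a', b') ∈ C'.P →
    ∀ e ∈ C.P, fP e = Sum.inr (a', b') → ∃ a b, e = Sum.inr (a, b) ∧ fN a = a' ∧ fN b = b')

/-- `C'` is a valid abstraction of `C`. -/
def ValidAbs (C' C : AComp Var Node) : Prop :=
  C'.layout = C.layout ∧ C'.V = C.V ∧ ∃ fN fP, IsWitness C' C fN fP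

variable [DecidableEq Node]

/-- The node map merging `b` into `a`. -/
def collapseN (a b : Node) : Node → Node := fun n => if n = b then a else n

/-- The edge map redirecting edges incident to `b` to `a`. -/
def collapseE (a b : Node) : Edge Var Node → Edge Var Node
  | Sum.inl (v, n) => Sum.inl (v, collapseN a b n)
  | Sum.inr (x, y) => Sum.inr (collapseN a b x, collapseN a b y)

/-- A node of an SLL component is special if a variable points to it or it
contributes to a back edge (an edge `(a, b)` with `depth a > depth b`). -/
def SpecialSLL (C : AComp Var Node) (depth : Node → ℕ) (n : Node) : Prop :=
  (∃ v, Sum.inl (v, n) ∈ C.P) ∨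
  (∃ a b, Sum.inr (a, b) ∈ C.P ∧ depth b < depth a ∧ (n = a ∨ n = b))

/-- One iteration of the while loop of Abstract-SLL on the state `(C, M)`:
pick distinct `a, b ∈ M` with `(a, b) ∈ P`, merge `b` into `a` (removing `b`,
redirecting its edges and adding the self-edge `(a, a)`) and remove `b`
from `M`. -/
def MergeStep : AComp Var Node × Set Node → AComp Var Node × Set Node → Prop :=
  fun s s' => ∃ a b, a ∈ s.2 ∧ b ∈ s.2 ∧ a ≠ b ∧ Sum.inr (a, b) ∈ s.1.P ∧
    s' = (⟨s.1.layout, s.1.V, s.1.N \ {b}, collapseE a b '' s.1.P⟩, s.2 \ {b})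

/-- A completed run of Abstract-SLL: finitely many merge steps after which no
mergeable pair remains. -/
def SLLRun (C : AComp Var Node) (depth : Node → ℕ)
    (C' : AComp Var Node) : Prop :=
  ∃ M' : Set Node,
    Relation.ReflTransGen MergeStep
      (C, {n | n ∈ C.N ∧ ¬ SpecialSLL C depth n}) (C', M') ∧
    ¬ ∃ a b, a ∈ M' ∧ b ∈ M' ∧ a ≠ b ∧ Sum.inr (a, b) ∈ C'.P


/-!
Every merge performed by Abstract-SLL on the path removes some `n j` with `n j` and `n (j - 1)`
ordinary and redirects its edges to the node that `n (j - 1)` has been merged into. Hence each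
reachable state is described by the set `D` of removed indices: its nodes are the `n i` with
`i ∉ D`, and its node edges are the images of the path edges under `n i ↦ n (survivor D i)`.
When no merge applies, `i ∉ D` holds exactly when `n i` is special or begins a maximal ordinary
segment, which gives the count.
-/

/-- After the path nodes with indices in `D` have been merged into their predecessors, the
node `n i` has become `n (survivor D i)`, where `survivor D i` is the last index `≤ i` outside
`D`. -/
def survivor {k : ℕ} (D : Finset ℕ) (i : Fin k) : Fin k :=
  ⟨Nat.findGreatest (· ∉ D) i, (Nat.findGreatest_le _).trans_lt i.isLt⟩

section survivor

variable {k : ℕ} {D : Finset ℕ} {i j : Fin k}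

lemma survivor_le : survivor D i ≤ i := Nat.findGreatest_le _

lemma survivor_of_notMem (h : (i : ℕ) ∉ D) : survivor D i = i := Fin.ext (Nat.findGreatest_eq h)

lemma survivor_notMem (h0 : 0 ∉ D) : (survivor D i : ℕ) ∉ D :=
  Nat.findGreatest_spec (P := (· ∉ D)) (Nat.zero_le _) h0

lemma mem_of_survivor_lt {m : ℕ} (h1 : (survivor D i : ℕ) < m) (h2 : m ≤ i) : m ∈ D :=
  not_not.mp (Nat.findGreatest_is_greatest h1 h2)

lemma survivor_of_succ_mem (hij : (j : ℕ) = i + 1) (hj : (j : ℕ) ∈ D) :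
    survivor D j = survivor D i :=
  Fin.ext <| by
    simp only [survivor, hij]
    exact Nat.findGreatest_of_not (by rw [← hij]; exact not_not.mpr hj)

lemma survivor_insert (h0 : 0 ∉ D) (hij : (j : ℕ) = i + 1) (l : Fin k) :
    survivor (insert (j : ℕ) D) l = if survivor D l = j then survivor D i else survivor D l := by
  have key : ∀ r : Fin k, survivor D r ≠ j → r ≤ l →
      (∀ m, (survivor D r : ℕ) < m → m ≤ l → m ∈ insert (j : ℕ) D) →
      survivor (insert (j : ℕ) D) l = survivor D r := fun r hr hrl hm =>
    Fin.ext <| Nat.findGreatest_eq_iff.mpr ⟨survivor_le.trans hrl,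
      fun _ => by simp [Fin.val_ne_iff.mpr hr, survivor_notMem h0],
      fun m h1 h2 => not_not.mpr (hm m h1 h2)⟩
  have hij' : i < j := by rw [Fin.lt_def]; omega
  split_ifs with h
  · have hjl : j ≤ l := h ▸ survivor_le
    refine key i (survivor_le.trans_lt hij').ne (hij'.le.trans hjl) fun m h1 h2 => ?_
    rw [Fin.ext_iff] at h
    rcases lt_trichotomy m j with hm | rfl | hm
    · exact Finset.mem_insert_of_mem (mem_of_survivor_lt h1 (by omega))
    · exact Finset.mem_insert_self _ _
    · exact Finset.mem_insert_of_mem (mem_of_survivor_lt (by omega) h2)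
  · exact key l h le_rfl fun m h1 h2 => Finset.mem_insert_of_mem (mem_of_survivor_lt h1 h2)

end survivor

def varEdges (C : AComp Var Node) : Set (Edge Var Node) := {e ∈ C.P | e.isLeft}

def pathEdges {k : ℕ} (f : Fin k → Node) : Set (Edge Var Node) :=
  {e | ∃ i j : Fin k, (j : ℕ) = i + 1 ∧ e = Sum.inr (f i, f j)}

lemma collapseE_image_varEdges {a b : Node} {C : AComp Var Node}
    (hb : ∀ v, Sum.inl (v, b) ∉ C.P) : collapseE a b '' varEdges C = varEdges C := by
  refine (Set.image_congr ?_).trans (Set.image_id _)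
  rintro (⟨v, x⟩ | e) ⟨he, hl⟩
  · have hxb : x ≠ b := by rintro rfl; exact hb v he
    simp [collapseE, collapseN, hxb]
  · simp at hl

lemma collapseE_image_pathEdges (a b : Node) {k : ℕ} (f : Fin k → Node) :
    collapseE a b '' pathEdges (Var := Var) f = pathEdges (collapseN a b ∘ f) := by
  ext e
  simp only [pathEdges, Set.mem_image, Set.mem_ofPred_eq]
  constructor
  · rintro ⟨_, ⟨i, j, hij, rfl⟩, rfl⟩
    exact ⟨i, j, hij, rfl⟩
  · rintro ⟨i, j, hij, rfl⟩
    exact ⟨_, ⟨i, j, hij, rfl⟩, rfl⟩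

section Path

variable {k : ℕ} (C : AComp Var Node) (depth : Node → ℕ) (n : Fin k → Node)

/-- The state of Abstract-SLL once the path nodes with indices in `D` have been merged into
their predecessors. -/
def pathState (D : Finset ℕ) : AComp Var Node × Set Node :=
  (⟨C.layout, C.V, n '' {i | (i : ℕ) ∉ D}, varEdges C ∪ pathEdges (n ∘ survivor D)⟩,
    n '' {i | ¬ SpecialSLL C depth (n i) ∧ (i : ℕ) ∉ D})

structure IsMergedSet (D : Finset ℕ) : Prop where
  zero_notMem : 0 ∉ D
  not_special : ∀ j : Fin k, (j : ℕ) ∈ D → ¬ SpecialSLL C depth (n j)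
  not_special_pred :
    ∀ i j : Fin k, (j : ℕ) = i + 1 → (j : ℕ) ∈ D → ¬ SpecialSLL C depth (n i)

variable {C depth n} {D : Finset ℕ}

omit [DecidableEq Node] in
lemma IsMergedSet.special_survivor_iff (hD : IsMergedSet C depth n D) (i : Fin k) :
    SpecialSLL C depth (n (survivor D i)) ↔ SpecialSLL C depth (n i) := by
  rcases (survivor_le (D := D) (i := i)).lt_or_eq with h | h
  · rw [Fin.lt_def] at h
    have hsucc : (survivor D i : ℕ) + 1 < k := by omega
    exact iff_of_false (hD.not_special_pred _ ⟨_, hsucc⟩ rfl (mem_of_survivor_lt (by simp) h))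
      (hD.not_special i (mem_of_survivor_lt h le_rfl))
  · rw [h]

lemma pathState_insert (hinj : Function.Injective n) (h0 : 0 ∉ D) {i j : Fin k}
    (hij : (j : ℕ) = i + 1) (hj : ¬ SpecialSLL C depth (n j)) :
    ((⟨C.layout, C.V, (pathState C depth n D).1.N \ {n j},
        collapseE (n (survivor D i)) (n j) '' (pathState C depth n D).1.P⟩,
      (pathState C depth n D).2 \ {n j}) : AComp Var Node × Set Node) =
      pathState C depth n (insert (j : ℕ) D) := by
  have hdiff : ∀ p : Fin k → Prop, n '' {l | p l ∧ (l : ℕ) ∉ D} \ {n j} =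
      n '' {l | p l ∧ (l : ℕ) ∉ insert (j : ℕ) D} := fun p => by
    rw [← Set.image_singleton, ← Set.image_sdiff hinj]
    congr 1
    ext l
    simp only [Set.mem_sdiff, Set.mem_ofPred_eq, Set.mem_singleton_iff, Finset.mem_insert,
      Fin.val_eq_val]
    tauto
  have hvar : ∀ v, Sum.inl (v, n j) ∉ C.P := fun v h => hj (Or.inl ⟨v, h⟩)
  have hcollapse : collapseN (n (survivor D i)) (n j) ∘ n ∘ survivor D =
      n ∘ survivor (insert (j : ℕ) D) := by
    funext l
    simp only [Function.comp_apply, survivor_insert h0 hij]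
    split_ifs with h
    · simp [collapseN, h]
    · simp [collapseN, hinj.ne h]
  simp only [pathState, Prod.mk.injEq, AComp.mk.injEq, true_and, Set.image_union,
    collapseE_image_varEdges hvar, collapseE_image_pathEdges, hcollapse]
  exact ⟨by simpa using hdiff (fun _ => True), hdiff _⟩

lemma IsMergedSet.exists_of_mergeStep (hinj : Function.Injective n) (hD : IsMergedSet C depth n D)
    {s : AComp Var Node × Set Node} (hs : MergeStep (pathState C depth n D) s) :
    ∃ D', IsMergedSet C depth n D' ∧ s = pathState C depth n D' := by
  obtain ⟨_, _, ⟨ia, ⟨hoa, -⟩, rfl⟩, ⟨jb, ⟨hob, -⟩, rfl⟩, hab, hedge, rfl⟩ := hs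
  obtain ⟨i, j, hij, he⟩ : ∃ i j : Fin k, (j : ℕ) = i + 1 ∧
      Sum.inr (n ia, n jb) = (Sum.inr (n (survivor D i), n (survivor D j)) : Edge Var Node) := by
    rcases hedge with ⟨-, hl⟩ | h
    · simp at hl
    · exact h
  simp only [Sum.inr.injEq, Prod.mk.injEq, hinj.eq_iff] at he
  obtain ⟨rfl, rfl⟩ := he
  have hjD : (j : ℕ) ∉ D := fun h => hab (by rw [survivor_of_succ_mem hij h])
  rw [survivor_of_notMem hjD] at hob hab ⊢
  rw [hD.special_survivor_iff] at hoa
  refine ⟨insert (j : ℕ) D, ⟨?_, ?_, ?_⟩, ?_⟩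
  · simp [hij, hD.zero_notMem]
  · intro l hl
    rcases Finset.mem_insert.mp hl with hl | hl
    · rwa [Fin.ext hl]
    · exact hD.not_special l hl
  · intro i' j' hij' hj'
    rcases Finset.mem_insert.mp hj' with hj' | hj'
    · rwa [Fin.ext (show (i' : ℕ) = i by omega)]
    · exact hD.not_special_pred i' j' hij' hj'
  exact pathState_insert hinj hD.zero_notMem hij hob

omit [DecidableEq Node] in
lemma varEdges_union_pathEdges
    (hP : ∀ x y : Node, Sum.inr (x, y) ∈ C.P ↔
      ∃ i : Fin k, ∃ h : i.val + 1 < k, x = n i ∧ y = n ⟨i.val + 1, h⟩) :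
    varEdges C ∪ pathEdges n = C.P := by
  ext (⟨v, x⟩ | ⟨x, y⟩)
  · simp [varEdges, pathEdges]
  · simp only [varEdges, pathEdges, hP, Set.mem_union, Set.mem_ofPred_eq, Sum.isLeft_inr,
      Bool.false_eq_true, and_false, Sum.inr.injEq, Prod.mk.injEq, false_or]
    constructor
    · rintro ⟨i, j, hij, rfl, rfl⟩
      exact ⟨i, hij ▸ j.isLt, rfl, congrArg n (Fin.ext hij)⟩
    · rintro ⟨i, h, rfl, rfl⟩
      exact ⟨i, _, rfl, rfl, rfl⟩

omit [DecidableEq Node] in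
lemma pathState_empty (hN : C.N = Set.range n)
    (hP : ∀ x y : Node, Sum.inr (x, y) ∈ C.P ↔
      ∃ i : Fin k, ∃ h : i.val + 1 < k, x = n i ∧ y = n ⟨i.val + 1, h⟩) :
    pathState C depth n ∅ = (C, {x | x ∈ C.N ∧ ¬ SpecialSLL C depth x}) := by
  have hsurvivor : survivor (∅ : Finset ℕ) = @id (Fin k) :=
    funext fun _ => survivor_of_notMem (Finset.notMem_empty _)
  simp only [pathState, hsurvivor, Finset.notMem_empty, not_false_eq_true, and_true,
    Set.ofPred_true, Set.image_univ, Function.comp_id, varEdges_union_pathEdges hP, ← hN,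
    Prod.mk.injEq, true_and]
  ext x
  rw [hN]
  constructor
  · rintro ⟨i, hi, rfl⟩
    exact ⟨⟨i, rfl⟩, hi⟩
  · rintro ⟨⟨i, rfl⟩, hi⟩
    exact ⟨i, hi, rfl⟩

omit [DecidableEq Node] in
lemma IsMergedSet.notMem_iff_of_terminal (hinj : Function.Injective n)
    (hD : IsMergedSet C depth n D)
    (hstop : ¬ ∃ a b, a ∈ (pathState C depth n D).2 ∧ b ∈ (pathState C depth n D).2 ∧
      a ≠ b ∧ Sum.inr (a, b) ∈ (pathState C depth n D).1.P) (i : Fin k) :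
    (i : ℕ) ∉ D ↔ SpecialSLL C depth (n i) ∨ (¬ SpecialSLL C depth (n i) ∧
      (i.val = 0 ∨
        SpecialSLL C depth (n ⟨i.val - 1, (Nat.sub_le _ _).trans_lt i.isLt⟩))) := by
  constructor
  · intro hiD
    by_cases hs : SpecialSLL C depth (n i)
    · exact Or.inl hs
    refine Or.inr ⟨hs, ?_⟩
    by_contra! h
    let p : Fin k := ⟨i.val - 1, by omega⟩
    have hpi : (i : ℕ) = p + 1 := by simp only [p]; omega
    have hp : survivor D p < i := survivor_le.trans_lt (by rw [Fin.lt_def]; omega)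
    exact hstop ⟨n (survivor D p), n i,
      ⟨survivor D p, ⟨(hD.special_survivor_iff p).not.mpr h.2,
        survivor_notMem hD.zero_notMem⟩, rfl⟩,
      ⟨i, ⟨hs, hiD⟩, rfl⟩, hinj.ne hp.ne,
      Or.inr ⟨p, i, hpi, by simp [survivor_of_notMem hiD]⟩⟩
  · rintro (hs | ⟨-, h0 | hp⟩) hiD
    · exact hD.not_special i hiD hs
    · exact hD.zero_notMem (h0 ▸ hiD)
    · have : i.val ≠ 0 := fun h0 => hD.zero_notMem (h0 ▸ hiD)
      exact hD.not_special_pred ⟨i.val - 1, by omega⟩ i (by simp; omega) hiD hp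

lemma exists_isMergedSet_of_reflTransGen (hinj : Function.Injective n)
    {s : AComp Var Node × Set Node}
    (h : Relation.ReflTransGen MergeStep (pathState C depth n ∅) s) :
    ∃ D, IsMergedSet C depth n D ∧ s = pathState C depth n D := by
  induction h with
  | refl => exact ⟨∅, ⟨by simp, by simp, by simp⟩, rfl⟩
  | tail _ hstep ih =>
    obtain ⟨D, hD, rfl⟩ := ih
    exact hD.exists_of_mergeStep hinj hstep

end Path

/-- on a pure path `n 0 → n 1 → … → n (k-1)` (so there are no
back edges and the special nodes are exactly the variable-pointed ones),
Abstract-SLL yields a component whose number of nodes equals the number of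
special nodes plus the number of maximal nonempty contiguous segments of
ordinary nodes (each such segment collapsing to one node with a self-edge). -/
theorem abstractSLL_path_count (k : ℕ) (n : Fin k → Node)
    (hinj : Function.Injective n) (C : AComp Var Node)
    (hN : C.N = Set.range n)
    (hP : ∀ x y : Node, Sum.inr (x, y) ∈ C.P ↔
      ∃ i : Fin k, ∃ h : i.val + 1 < k, x = n i ∧ y = n ⟨i.val + 1, h⟩)
    (depth : Node → ℕ)
    (C' : AComp Var Node) (hrun : SLLRun C depth C') :
    C'.N.ncard =
      {i : Fin k | SpecialSLL C depth (n i)}.ncard +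
      {i : Fin k | ¬ SpecialSLL C depth (n i) ∧
        (i.val = 0 ∨
          SpecialSLL C depth (n ⟨i.val - 1, by omega⟩))}.ncard := by
  obtain ⟨M', hrun, hstop⟩ := hrun
  rw [← pathState_empty hN hP] at hrun
  obtain ⟨D, hD, hs⟩ := exists_isMergedSet_of_reflTransGen hinj hrun
  obtain ⟨rfl, rfl⟩ := Prod.mk.inj hs
  have hsplit : {i : Fin k | (i : ℕ) ∉ D} = {i | SpecialSLL C depth (n i)} ∪
      {i | ¬ SpecialSLL C depth (n i) ∧
        (i.val = 0 ∨ SpecialSLL C depth (n ⟨i.val - 1, by omega⟩))} :=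
    Set.ext (hD.notMem_iff_of_terminal hinj hstop)
  calc _ = {i : Fin k | (i : ℕ) ∉ D}.ncard := Set.ncard_image_of_injective _ hinj
    _ = _ := by
      rw [hsplit, Set.ncard_union_eq (Set.disjoint_left.mpr fun _ hs hg => hg.1 hs)]
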